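/- Every rational number r < -1 admits a unique finite negative continued fraction expansion r = a_1 - 1/(a_2 - 1/(... - 1/a_n)) in which every coefficient a_i is an integer with a_i ≤ -2. -/

import Mathlib

/-- Evaluation of a negative continued fraction `[a₁, …, aₙ] = a₁ - 1/(a₂ - 1/(⋯ - 1/aₙ))`. -/
def ncf : List ℤ → ℚ
  | [] => 0
  | [a] => (a : ℚ)
  | a :: b :: l => (a : ℚ) - 1 / ncf (b :: l)

lemma ncf_cons_cons (a b : ℤ) (l : List ℤ) :
    ncf (a :: b :: l) = (a : ℚ) - 1 / ncf (b :: l) := rfl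

lemma ncf_lt_neg_one : ∀ l : List ℤ, l ≠ [] → (∀ a ∈ l, a ≤ -2) → ncf l < -1 := by
  intro l
  induction l with
  | nil => intro h; exact absurd rfl h
  | cons a t ih =>
    intro _ h
    cases t with
    | nil =>
      have ha : a ≤ -2 := h a (by simp)
      show (a : ℚ) < -1
      have : (a : ℚ) ≤ -2 := by exact_mod_cast ha
      linarith
    | cons b t' =>
      have hs : ncf (b :: t') < -1 :=
        ih (by simp) (fun x hx => h x (List.mem_cons_of_mem _ hx))
      have ha : a ≤ -2 := h a (by simp)
      have haq : (a : ℚ) ≤ -2 := by exact_mod_cast ha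
      have hs0 : ncf (b :: t') ≠ 0 := by linarith
      have key : ncf (b :: t') * (1 / ncf (b :: t')) = 1 := by
        field_simp
      rw [ncf_cons_cons]
      nlinarith [key]

lemma ncf_bounds (a b : ℤ) (t : List ℤ) (h : ∀ x ∈ a :: b :: t, x ≤ -2) :
    (a : ℚ) < ncf (a :: b :: t) ∧ ncf (a :: b :: t) < a + 1 := by
  have hs : ncf (b :: t) < -1 :=
    ncf_lt_neg_one (b :: t) (by simp) (fun x hx => h x (List.mem_cons_of_mem _ hx))
  have hs0 : ncf (b :: t) ≠ 0 := by linarith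
  have key : ncf (b :: t) * (1 / ncf (b :: t)) = 1 := by field_simp
  rw [ncf_cons_cons]
  constructor <;> nlinarith [key]

lemma ncf_aux : ∀ n : ℕ, ∀ r : ℚ, r.den = n → r < -1 →
    ∃! l : List ℤ, l ≠ [] ∧ (∀ a ∈ l, a ≤ -2) ∧ ncf l = r := by
  intro n
  induction n using Nat.strong_induction_on with
  | _ n ih =>
  intro r hden hr
  by_cases h1 : r.den = 1
  · -- r is an integer
    have hrz : (r.num : ℚ) = r := (Rat.den_eq_one_iff r).mp h1
    have hnum : r.num ≤ -2 := by
      have : (r.num : ℚ) < -1 := by rw [hrz]; exact hr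
      have : r.num < -1 := by exact_mod_cast this
      omega
    refine ⟨[r.num], ⟨by simp, ?_, hrz⟩, ?_⟩
    · intro x hx
      simp only [List.mem_singleton] at hx
      subst hx; exact hnum
    · rintro l ⟨hne, hle, hval⟩
      match l with
      | [] => exact absurd rfl hne
      | [x] =>
        have hx : (x : ℚ) = r := hval
        have : x = r.num := by rw [← hrz] at hx; exact_mod_cast hx
        simp [this]
      | x :: y :: t =>
        exfalso
        obtain ⟨hlo, hhi⟩ := ncf_bounds x y t hle
        rw [hval, ← hrz] at hlo hhi
        have h1' : x < r.num := by exact_mod_cast hlo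
        have h2' : r.num < x + 1 := by exact_mod_cast hhi
        omega
  · -- r is not an integer
    set a : ℤ := ⌊r⌋ with haq
    set m : ℤ := r.num - a * r.den with hm
    have hden0 : (0 : ℚ) < (r.den : ℚ) := by exact_mod_cast r.pos
    have hnd : (r.num : ℚ) = r * (r.den : ℚ) := by
      have h := Rat.num_div_den r
      rw [div_eq_iff (ne_of_gt hden0)] at h
      linarith [h]
    have hfrac : r - (a : ℚ) = (m : ℚ) / (r.den : ℚ) := by
      rw [hm]
      push_cast
      rw [eq_div_iff (ne_of_gt hden0), sub_mul]
      linarith [hnd]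
    have hfl : (a : ℚ) ≤ r := Int.floor_le r
    have hfne : (a : ℚ) ≠ r := by
      intro hcontra
      have : r.den = 1 := by rw [← hcontra]; exact Rat.den_intCast a
      exact h1 this
    have hfpos : (0 : ℚ) < r - a := lt_of_le_of_ne (by linarith) (by
      intro hc; exact hfne (by linarith))
    have hflt : r - (a : ℚ) < 1 := by
      have := Int.lt_floor_add_one r
      linarith
    have hmpos : 0 < m := by
      have : (0 : ℚ) < (m : ℚ) / (r.den : ℚ) := hfrac ▸ hfpos
      have : (0 : ℚ) < (m : ℚ) := by
        by_contra hc
        push_neg at hc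
        have : (m : ℚ) / (r.den : ℚ) ≤ 0 := div_nonpos_of_nonpos_of_nonneg hc hden0.le
        linarith
      exact_mod_cast this
    have hmlt : m < (r.den : ℤ) := by
      have h2 : (m : ℚ) / (r.den : ℚ) < 1 := hfrac ▸ hflt
      have : (m : ℚ) < (r.den : ℚ) := by
        rwa [div_lt_one hden0] at h2
      exact_mod_cast this
    -- coprimality of m and r.den
    have hcop : Nat.Coprime m.natAbs r.den := by
      have hred : Nat.Coprime r.num.natAbs r.den := r.reduced
      have h2 : IsCoprime (r.num) ((r.den : ℤ)) := by
        rw [Int.isCoprime_iff_gcd_eq_one]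
        exact hred
      have h3 : IsCoprime m ((r.den : ℤ)) := by
        have h4 := h2.add_mul_left_left (-a)
        have h5 : m = r.num + (r.den : ℤ) * -a := by rw [hm]; ring
        rwa [h5]
      have := Int.isCoprime_iff_gcd_eq_one.mp h3
      simpa [Int.gcd] using this
    -- the tail value
    set s : ℚ := ((-(r.den : ℤ) : ℤ) : ℚ) / ((m : ℤ) : ℚ) with hsdef
    have hmq : (0 : ℚ) < (m : ℚ) := by exact_mod_cast hmpos
    have hs_eq : s = 1 / ((a : ℚ) - r) := by
      rw [hsdef]
      have hne : (a : ℚ) - r ≠ 0 := by intro hc; exact hfne (by linarith)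
      rw [div_eq_div_iff (ne_of_gt hmq) hne]
      have : (a : ℚ) - r = -((m : ℚ) / (r.den : ℚ)) := by rw [← hfrac]; ring
      rw [this]
      push_cast
      field_simp
    have hslt : s < -1 := by
      rw [hs_eq]
      have hd1 : (a : ℚ) - r < 0 := by linarith
      have hd2 : -1 < (a : ℚ) - r := by linarith
      rw [div_lt_iff_of_neg hd1]
      linarith
    have hsden : (s.den : ℤ) = m := by
      rw [hsdef]
      apply Rat.den_div_eq_of_coprime hmpos
      simpa [Int.natAbs_neg] using hcop.symm
    have hsdlt : s.den < n := by
      have : (s.den : ℤ) < (r.den : ℤ) := hsden ▸ hmlt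
      have : s.den < r.den := by exact_mod_cast this
      rwa [hden] at this
    obtain ⟨l', ⟨hne', hle', hval'⟩, huniq'⟩ := ih s.den hsdlt s rfl hslt
    obtain ⟨b, t, rfl⟩ : ∃ b t, l' = b :: t := by
      cases l' with
      | nil => exact absurd rfl hne'
      | cons b t => exact ⟨b, t, rfl⟩
    have ha2 : a ≤ -2 := by
      have : (a : ℚ) < -1 := lt_of_le_of_lt hfl hr
      have : a < -1 := by exact_mod_cast this
      omega
    have hs0 : s ≠ 0 := by linarith
    have hinv : 1 / s = (a : ℚ) - r := by
      rw [hs_eq]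
      have hne : (a : ℚ) - r ≠ 0 := by intro hc; exact hfne (by linarith)
      field_simp
    have hval_main : ncf (a :: b :: t) = r := by
      rw [ncf_cons_cons, hval', hinv]; ring
    refine ⟨a :: b :: t, ⟨by simp, ?_, hval_main⟩, ?_⟩
    · intro x hx
      rcases List.mem_cons.mp hx with h | h
      · subst h; exact ha2
      · exact hle' x h
    · rintro l ⟨hne, hle, hval⟩
      match l with
      | [] => exact absurd rfl hne
      | [x] =>
        exfalso
        have hx : (x : ℚ) = r := hval
        have : r.den = 1 := by rw [← hx]; exact Rat.den_intCast x
        exact h1 this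
      | x :: y :: t2 =>
        obtain ⟨hlo, hhi⟩ := ncf_bounds x y t2 hle
        rw [hval] at hlo hhi
        have hxa : x = a := by
          have : ⌊r⌋ = x := Int.floor_eq_iff.mpr ⟨hlo.le, by exact_mod_cast hhi⟩
          omega
        subst hxa
        -- tail of l evaluates to s
        have htail : ncf (y :: t2) = s := by
          have hw : ncf (y :: t2) < -1 :=
            ncf_lt_neg_one (y :: t2) (by simp)
              (fun z hz => hle z (List.mem_cons_of_mem _ hz))
          have hw0 : ncf (y :: t2) ≠ 0 := by linarith
          have heq : (a : ℚ) - 1 / ncf (y :: t2) = r := hval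
          have h1' : 1 / ncf (y :: t2) = (a : ℚ) - r := by linarith
          have h2' : 1 / s = (a : ℚ) - r := hinv
          have hne : (a : ℚ) - r ≠ 0 := by intro hc; exact hfne (by linarith)
          have : 1 / ncf (y :: t2) = 1 / s := by rw [h1', h2']
          field_simp at this
          linarith [this]
        have : y :: t2 = b :: t := huniq' (y :: t2) ⟨by simp,
          fun z hz => hle z (List.mem_cons_of_mem _ hz), htail⟩
        rw [this]

theorem stmt_0 (r : ℚ) (hr : r < -1) :
    ∃! l : List ℤ, l ≠ [] ∧ (∀ a ∈ l, a ≤ -2) ∧ ncf l = r := by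
  exact ncf_aux r.den r rfl hr
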